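/- Let X and Y be finite nonempty sets and let A : X × Y → {−1,1} be the sign matrix of a function class (rows indexed by hypotheses, columns by inputs), with statistical query dimension sq(A). Then √(sq(A)/2) ≤ 1/disc×(A) ≤ 8·sq(A)²; equivalently, 1/(8·sq(A)²) ≤ disc×(A) ≤ √(2/sq(A)). -/

import Mathlib

open MeasureTheory Finset

attribute [local instance] Classical.propDecidable

/-- `ρ` is a probability distribution on the finite type `X`. -/
def IsDist {X : Type} [Fintype X] (ρ : X → ℝ) : Prop :=
  (∀ x, 0 ≤ ρ x) ∧ ∑ x, ρ x = 1

/-- The discrepancy of the sign matrix `A` with respect to the distribution with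
weights `ζ x y`: the maximum over rectangles `B × C` of the absolute bias. -/
noncomputable def discUnder {X Y : Type} [Fintype X] [Fintype Y]
    (ζ : X → Y → ℝ) (A : X → Y → ℝ) : ℝ :=
  ⨆ B : Finset X, ⨆ C : Finset Y, |∑ x ∈ B, ∑ y ∈ C, ζ x y * A x y|

/-- The product discrepancy of `A`: the infimum of `disc_ζ(A)` over product
distributions `ζ = μ ⊗ ν`. -/
noncomputable def discProd {X Y : Type} [Fintype X] [Fintype Y] (A : X → Y → ℝ) : ℝ :=
  sInf {r : ℝ | ∃ μ : X → ℝ, ∃ ν : Y → ℝ, IsDist μ ∧ IsDist ν ∧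
    r = discUnder (fun x y => μ x * ν y) A}

/-- The statistical query dimension of the class of row functions of the sign matrix
`A`: the largest `d` such that for some distribution `ρ` on the columns there are `d`
distinct rows that are pairwise at most `1/d`-correlated under `ρ`. -/
noncomputable def sqDimM {X Y : Type} [Fintype X] [Fintype Y] (A : X → Y → ℝ) : ℕ :=
  sSup {d : ℕ | ∃ ρ : Y → ℝ, IsDist ρ ∧ ∃ g : Fin d → X,
    Function.Injective (fun i => A (g i)) ∧
    ∀ i j, i ≠ j → |∑ y, ρ y * (A (g i) y * A (g j) y)| ≤ 1 / (d : ℝ)}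
/-!
For the upper bound on `disc×`, take `d = sq(A)` almost orthogonal rows `f₁, …, f_d` under `ρ`
and the uniform distribution `μ` on them. For a column set `C`, the correlations `cᵢ = ⟨1_C, fᵢ⟩_ρ`
satisfy an approximate Bessel inequality `∑ cᵢ² ≤ 2`, so by Cauchy–Schwarz every rectangle has
`μ ⊗ ρ`-bias `|∑_{i ∈ S} cᵢ| / d ≤ √(2/d)`.

For the lower bound, small discrepancy `δ` under `μ ⊗ ν` forces every row to have average absolute
`ν`-correlation at most `4δ` with a `μ`-random row. Rows can then be picked greedily, each
`1/m`-correlated with all earlier ones, as long as `4δ(m - 1) ≤ 1/m`; if `δ < 1/(8 sq(A)²)` this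
produces `sq(A) + 1` such rows, which is impossible.
-/

open scoped RealInnerProductSpace

section Discrepancy

variable {X Y : Type} [Fintype X] [Fintype Y]

theorem abs_sum_rect_le_discUnder (ζ A : X → Y → ℝ) (B : Finset X) (C : Finset Y) :
    |∑ x ∈ B, ∑ y ∈ C, ζ x y * A x y| ≤ discUnder ζ A :=
  (le_ciSup (f := fun C => |∑ x ∈ B, ∑ y ∈ C, ζ x y * A x y|) (Set.finite_range _).bddAbove C).trans
    (le_ciSup (f := fun B => ⨆ C : Finset Y, |∑ x ∈ B, ∑ y ∈ C, ζ x y * A x y|)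
      (Set.finite_range _).bddAbove B)

theorem discUnder_nonneg (ζ A : X → Y → ℝ) : 0 ≤ discUnder ζ A := by
  simpa using abs_sum_rect_le_discUnder ζ A ∅ ∅

theorem discUnder_le {ζ A : X → Y → ℝ} {r : ℝ}
    (h : ∀ B C, |∑ x ∈ B, ∑ y ∈ C, ζ x y * A x y| ≤ r) : discUnder ζ A ≤ r :=
  ciSup_le fun B => ciSup_le fun C => h B C

theorem discProd_le_discUnder (A : X → Y → ℝ) {μ : X → ℝ} {ν : Y → ℝ}
    (hμ : IsDist μ) (hν : IsDist ν) : discProd A ≤ discUnder (fun x y => μ x * ν y) A :=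
  csInf_le ⟨0, by rintro _ ⟨μ, ν, -, -, rfl⟩; exact discUnder_nonneg _ _⟩ ⟨μ, ν, hμ, hν, rfl⟩

end Discrepancy

section Empirical

variable {ι : Type*} {X : Type} [Fintype ι]

noncomputable def empiricalDist (g : ι → X) (x : X) : ℝ :=
  (#{i | g i = x} : ℝ) / Fintype.card ι

theorem sum_empiricalDist_mul (g : ι → X) (B : Finset X) (h : X → ℝ) :
    ∑ x ∈ B, empiricalDist g x * h x = (∑ i with g i ∈ B, h (g i)) / Fintype.card ι := by
  simp only [empiricalDist, div_mul_eq_mul_div, ← Finset.sum_div, Finset.natCast_card_filter,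
    Finset.sum_mul, ite_mul, one_mul, zero_mul]
  rw [Finset.sum_comm, Finset.sum_filter]
  simp only [Finset.sum_ite_eq]

theorem isDist_empiricalDist [Fintype X] [Nonempty ι] (g : ι → X) : IsDist (empiricalDist g) := by
  refine ⟨fun x => by unfold empiricalDist; positivity, ?_⟩
  simpa [Fintype.card_ne_zero] using sum_empiricalDist_mul g univ fun _ => 1

end Empirical

theorem IsDist.exists_le_of_sum_mul_le {X : Type} [Fintype X] {μ f : X → ℝ} {c : ℝ}
    (hμ : IsDist μ) (h : ∑ x, μ x * f x ≤ c) : ∃ x, f x ≤ c := by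
  by_contra! hlt
  obtain ⟨x₀, -, hx₀⟩ : ∃ x ∈ univ, (0 : ℝ) < μ x :=
    Finset.exists_lt_of_sum_lt (by simp [hμ.2])
  have hpos : 0 < ∑ x, μ x * (f x - c) :=
    Finset.sum_pos' (fun x _ => mul_nonneg (hμ.1 x) (sub_pos.2 (hlt x)).le)
      ⟨x₀, mem_univ _, mul_pos hx₀ (sub_pos.2 (hlt x₀))⟩
  simp only [mul_sub, Finset.sum_sub_distrib, ← Finset.sum_mul, hμ.2, one_mul] at hpos
  linarith

theorem exists_fin_pairwise_le_of_sum_mul_le {X : Type} [Fintype X] (K : X → X → ℝ)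
    (hK₀ : ∀ x x', 0 ≤ K x x') (hK : ∀ x x', K x x' = K x' x) {μ : X → ℝ} (hμ : IsDist μ)
    {ε t : ℝ} (hε : 0 ≤ ε) (havg : ∀ x', ∑ x, μ x * K x x' ≤ ε) (m : ℕ)
    (hmt : ((m : ℝ) - 1) * ε ≤ t) :
    ∃ g : Fin m → X, ∀ i j, i ≠ j → K (g i) (g j) ≤ t := by
  suffices ∀ k ≤ m, ∃ g : Fin k → X, ∀ i j, i ≠ j → K (g i) (g j) ≤ t from this m le_rfl
  intro k
  induction k with
  | zero => exact fun _ => ⟨Fin.elim0, fun i => i.elim0⟩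
  | succ k ih =>
    intro hk
    obtain ⟨g, hg⟩ := ih (by omega)
    obtain ⟨x, hx⟩ : ∃ x, ∑ i, K x (g i) ≤ k * ε := by
      refine hμ.exists_le_of_sum_mul_le ?_
      calc ∑ x, μ x * ∑ i, K x (g i) = ∑ i, ∑ x, μ x * K x (g i) := by
            simp only [Finset.mul_sum]; exact Finset.sum_comm
        _ ≤ ∑ _i : Fin k, ε := Finset.sum_le_sum fun i _ => havg (g i)
        _ = k * ε := by simp
    have hnew : ∀ i, K x (g i) ≤ t := fun i => calc
      K x (g i) ≤ ∑ i, K x (g i) := Finset.single_le_sum (fun _ _ => hK₀ _ _) (mem_univ i)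
      _ ≤ k * ε := hx
      _ ≤ ((m : ℝ) - 1) * ε := by
          gcongr
          have : (k : ℝ) + 1 ≤ m := by exact_mod_cast hk
          linarith
      _ ≤ t := hmt
    refine ⟨Fin.snoc g x, fun i j hij => ?_⟩
    cases i using Fin.lastCases <;> cases j using Fin.lastCases <;>
      simp_all [Fin.snoc_castSucc, Fin.snoc_last, Fin.castSucc_inj]

theorem sum_abs_le_two_mul_of_abs_sum_le {ι : Type*} [Fintype ι] (f : ι → ℝ) {M : ℝ}
    (h : ∀ s : Finset ι, |∑ i ∈ s, f i| ≤ M) : ∑ i, |f i| ≤ 2 * M := by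
  have hsplit : ∑ i, |f i| = ∑ i with 0 ≤ f i, f i - ∑ i with ¬0 ≤ f i, f i := by
    rw [← Finset.sum_filter_add_sum_filter_not univ (fun i => 0 ≤ f i), sub_eq_add_neg,
      ← Finset.sum_neg_distrib]
    congr 1 <;> refine Finset.sum_congr rfl fun i hi => ?_
    · exact abs_of_nonneg (Finset.mem_filter.1 hi).2
    · exact abs_of_neg (not_le.1 (Finset.mem_filter.1 hi).2)
  rw [hsplit]
  linarith [(abs_le.1 (h {i | 0 ≤ f i})).2, (abs_le.1 (h {i | ¬0 ≤ f i})).1]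

section Correlation

variable {X Y : Type} [Fintype Y]

noncomputable def corr (ν : Y → ℝ) (A : X → Y → ℝ) (x x' : X) : ℝ :=
  ∑ y, ν y * (A x y * A x' y)

theorem corr_comm (ν : Y → ℝ) (A : X → Y → ℝ) (x x' : X) : corr ν A x x' = corr ν A x' x := by
  simp only [corr, mul_comm (A x _)]

theorem corr_self {ν : Y → ℝ} (hν : IsDist ν) {A : X → Y → ℝ} {x : X}
    (hx : ∀ y, A x y = 1 ∨ A x y = -1) : corr ν A x x = 1 := by
  have hsq : ∀ y, A x y * A x y = 1 := fun y => by rcases hx y with h | h <;> simp [h]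
  simp [corr, hsq, hν.2]

theorem abs_sum_mul_corr_le [Fintype X] (A : X → Y → ℝ) (μ : X → ℝ) (ν : Y → ℝ) {x' : X}
    (hx' : ∀ y, |A x' y| ≤ 1) (B : Finset X) :
    |∑ x ∈ B, μ x * corr ν A x x'| ≤ 2 * discUnder (fun x y => μ x * ν y) A := by
  set h : Y → ℝ := fun y => ∑ x ∈ B, μ x * ν y * A x y
  have hsum : ∑ x ∈ B, μ x * corr ν A x x' = ∑ y, h y * A x' y := by
    simp only [h, corr, Finset.mul_sum, Finset.sum_mul]
    rw [Finset.sum_comm]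
    exact Finset.sum_congr rfl fun _ _ => Finset.sum_congr rfl fun _ _ => by ring
  have hcols : ∀ C : Finset Y, |∑ y ∈ C, h y| ≤ discUnder (fun x y => μ x * ν y) A := fun C => by
    rw [Finset.sum_comm]; exact abs_sum_rect_le_discUnder _ A B C
  calc |∑ x ∈ B, μ x * corr ν A x x'| ≤ ∑ y, |h y * A x' y| := hsum ▸ abs_sum_le_sum_abs _ _
    _ ≤ ∑ y, |h y| := Finset.sum_le_sum fun y _ => by
        rw [abs_mul]; exact mul_le_of_le_one_right (abs_nonneg _) (hx' y)
    _ ≤ _ := sum_abs_le_two_mul_of_abs_sum_le h hcols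

theorem sum_mul_abs_corr_le [Fintype X] (A : X → Y → ℝ) {μ : X → ℝ} (hμ : ∀ x, 0 ≤ μ x) (ν : Y → ℝ)
    {x' : X} (hx' : ∀ y, |A x' y| ≤ 1) :
    ∑ x, μ x * |corr ν A x x'| ≤ 4 * discUnder (fun x y => μ x * ν y) A := by
  have := sum_abs_le_two_mul_of_abs_sum_le _ (abs_sum_mul_corr_le A μ ν hx')
  simp only [abs_mul, abs_of_nonneg (hμ _)] at this
  linarith

end Correlation

section WeightedL2

variable {Y : Type} [Fintype Y]

/-- The isometric embedding of `L²(ν)` into Euclidean space. -/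
noncomputable def weightedL2 (ν f : Y → ℝ) : EuclideanSpace ℝ Y :=
  WithLp.toLp 2 fun y => √(ν y) * f y

theorem inner_weightedL2 {ν : Y → ℝ} (hν : ∀ y, 0 ≤ ν y) (f f' : Y → ℝ) :
    ⟪weightedL2 ν f, weightedL2 ν f'⟫ = ∑ y, ν y * (f y * f' y) := by
  simp only [weightedL2, PiLp.inner_apply, RCLike.inner_apply, conj_trivial]
  refine Finset.sum_congr rfl fun y _ => ?_
  have := Real.mul_self_sqrt (hν y)
  linear_combination (f y * f' y) * this

end WeightedL2

theorem sum_sq_inner_le_of_almost_orthonormal {E ι : Type*} [NormedAddCommGroup E]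
    [InnerProductSpace ℝ E] [Fintype ι] {v : ι → E} {ε : ℝ} (hε : 0 ≤ ε)
    (hv : ∀ i, ‖v i‖ ≤ 1) (hvv : ∀ i j, i ≠ j → |⟪v i, v j⟫| ≤ ε) (u : E) :
    ∑ i, ⟪u, v i⟫ ^ 2 ≤ (1 + Fintype.card ι * ε) * ‖u‖ ^ 2 := by
  set c : ι → ℝ := fun i => ⟪u, v i⟫
  set T := ∑ i, c i ^ 2
  set F := ∑ i, c i • v i
  have hT : T = ⟪u, F⟫ := by simp [F, T, c, inner_sum, inner_smul_right, sq]
  have hterm : ∀ i j,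
      c i * c j * ⟪v i, v j⟫ ≤ (if i = j then c i ^ 2 else 0) + ε * (|c i| * |c j|) := by
    intro i j
    by_cases hij : i = j
    · subst hij
      have hvi : ⟪v i, v i⟫ ≤ 1 := by
        rw [real_inner_self_eq_norm_sq]; exact pow_le_one₀ (norm_nonneg _) (hv i)
      simp only [if_true]
      nlinarith [sq_nonneg (c i), mul_nonneg hε (mul_nonneg (abs_nonneg (c i)) (abs_nonneg (c i)))]
    · rw [if_neg hij, zero_add]
      calc c i * c j * ⟪v i, v j⟫ ≤ |c i * c j * ⟪v i, v j⟫| := le_abs_self _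
        _ = |c i| * |c j| * |⟪v i, v j⟫| := by rw [abs_mul, abs_mul]
        _ ≤ |c i| * |c j| * ε := by gcongr; exact hvv i j hij
        _ = ε * (|c i| * |c j|) := mul_comm _ _
  have hF : ‖F‖ ^ 2 ≤ (1 + Fintype.card ι * ε) * T := by
    have hcs : (∑ i, |c i|) ^ 2 ≤ Fintype.card ι * T := by
      simpa [T] using sq_sum_le_card_mul_sum_sq (s := univ) (f := fun i => |c i|)
    calc ‖F‖ ^ 2 = ∑ i, ∑ j, c i * c j * ⟪v i, v j⟫ := by
          rw [← real_inner_self_eq_norm_sq]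
          simp only [F, sum_inner, inner_sum, inner_smul_left, inner_smul_right, conj_trivial,
            Finset.mul_sum]
          rw [Finset.sum_comm]
          exact Finset.sum_congr rfl fun _ _ => Finset.sum_congr rfl fun _ _ => by ring
      _ ≤ ∑ i, ∑ j, ((if i = j then c i ^ 2 else 0) + ε * (|c i| * |c j|)) :=
          Finset.sum_le_sum fun i _ => Finset.sum_le_sum fun j _ => hterm i j
      _ = T + ε * (∑ i, |c i|) ^ 2 := by
          simp only [Finset.sum_add_distrib, Finset.sum_ite_eq, mem_univ, if_true,
            ← Finset.mul_sum, T, sq, Finset.sum_mul_sum]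
      _ ≤ T + ε * (Fintype.card ι * T) := by gcongr
      _ = (1 + Fintype.card ι * ε) * T := by ring
  have hT0 : 0 ≤ T := Finset.sum_nonneg fun i _ => sq_nonneg _
  have hTsq : T ^ 2 ≤ ‖u‖ ^ 2 * ((1 + Fintype.card ι * ε) * T) := by
    calc T ^ 2 ≤ (‖u‖ * ‖F‖) ^ 2 := by
          rw [hT]; exact pow_le_pow_left₀ (by rw [← hT]; exact hT0) (real_inner_le_norm u F) 2
      _ = ‖u‖ ^ 2 * ‖F‖ ^ 2 := mul_pow _ _ _
      _ ≤ _ := by gcongr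
  rcases hT0.eq_or_lt with hT0 | hT0
  · rw [← hT0]; positivity
  · nlinarith

section SQDimension

variable {X Y : Type} [Fintype X] [Fintype Y]

theorem bddAbove_sqDimM_set (A : X → Y → ℝ) :
    BddAbove {d : ℕ | ∃ ρ : Y → ℝ, IsDist ρ ∧ ∃ g : Fin d → X,
      Function.Injective (fun i => A (g i)) ∧
      ∀ i j, i ≠ j → |∑ y, ρ y * (A (g i) y * A (g j) y)| ≤ 1 / (d : ℝ)} :=
  ⟨Fintype.card X, by
    rintro _ ⟨_, _, g, hg, _⟩
    simpa using Fintype.card_le_of_injective g (Function.Injective.of_comp hg)⟩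

theorem le_sqDimM {A : X → Y → ℝ} {ρ : Y → ℝ} (hρ : IsDist ρ) {d : ℕ} (g : Fin d → X)
    (hg : Function.Injective fun i => A (g i))
    (hcorr : ∀ i j, i ≠ j → |corr ρ A (g i) (g j)| ≤ 1 / (d : ℝ)) : d ≤ sqDimM A :=
  le_csSup (bddAbove_sqDimM_set A) ⟨ρ, hρ, g, hg, hcorr⟩

theorem exists_sqDimM_family [Nonempty Y] (A : X → Y → ℝ) :
    ∃ ρ : Y → ℝ, IsDist ρ ∧ ∃ g : Fin (sqDimM A) → X,
      ∀ i j, i ≠ j → |corr ρ A (g i) (g j)| ≤ 1 / (sqDimM A : ℝ) := by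
  have hmem := Nat.sSup_mem ?_ (bddAbove_sqDimM_set A)
  · obtain ⟨ρ, hρ, g, -, hg⟩ := hmem
    exact ⟨ρ, hρ, g, hg⟩
  · exact ⟨0, empiricalDist id, isDist_empiricalDist id, Fin.elim0,
      Function.injective_of_subsingleton _, fun i => i.elim0⟩

theorem one_le_sqDimM [Nonempty X] [Nonempty Y] (A : X → Y → ℝ) : 1 ≤ sqDimM A :=
  le_sqDimM (isDist_empiricalDist id) (fun _ => Classical.arbitrary X)
    (Function.injective_of_subsingleton _) fun i j hij => absurd (Subsingleton.elim i j) hij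

end SQDimension

section ProductDiscrepancy

variable {X Y : Type} [Fintype X] [Fintype Y] {A : X → Y → ℝ}

theorem discUnder_empiricalDist_le (hA : ∀ x y, A x y = 1 ∨ A x y = -1) {ρ : Y → ℝ}
    (hρ : IsDist ρ) {d : ℕ} [NeZero d] (g : Fin d → X)
    (hcorr : ∀ i j, i ≠ j → |corr ρ A (g i) (g j)| ≤ 1 / (d : ℝ)) :
    discUnder (fun x y => empiricalDist g x * ρ y) A ≤ √(2 / d) := by
  refine discUnder_le fun B C => Real.abs_le_sqrt ?_
  set u := weightedL2 ρ fun y => if y ∈ C then 1 else 0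
  set c : Fin d → ℝ := fun i => ⟪u, weightedL2 ρ (A (g i))⟫
  have hd : (0 : ℝ) < d := by simpa using NeZero.pos d
  have hrect : ∑ x ∈ B, ∑ y ∈ C, empiricalDist g x * ρ y * A x y = (∑ i with g i ∈ B, c i) / d := by
    simp only [mul_assoc, ← Finset.mul_sum, sum_empiricalDist_mul, Fintype.card_fin, c, u,
      inner_weightedL2 hρ.1, ite_mul, one_mul, zero_mul, mul_ite, mul_zero, Finset.sum_ite_mem,
      univ_inter]
  have hu : ‖u‖ ^ 2 ≤ 1 := by
    rw [← real_inner_self_eq_norm_sq, inner_weightedL2 hρ.1]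
    refine (Finset.sum_le_sum fun y _ => mul_le_of_le_one_right (hρ.1 y) ?_).trans_eq hρ.2
    split_ifs <;> norm_num
  have hbessel : ∑ i, c i ^ 2 ≤ 2 := by
    have hv : ∀ i, ‖weightedL2 ρ (A (g i))‖ ≤ 1 := fun i => by
      rw [← sq_le_one_iff₀ (norm_nonneg _), ← real_inner_self_eq_norm_sq, inner_weightedL2 hρ.1]
      exact (corr_self hρ (hA (g i))).le
    have := sum_sq_inner_le_of_almost_orthonormal (ε := 1 / d) (by positivity) hv
      (fun i j hij => by rw [inner_weightedL2 hρ.1]; exact hcorr i j hij) u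
    rw [Fintype.card_fin, mul_one_div_cancel hd.ne'] at this
    nlinarith
  have hcs : (∑ i with g i ∈ B, c i) ^ 2 ≤ d * 2 :=
    calc (∑ i with g i ∈ B, c i) ^ 2 ≤ #{i | g i ∈ B} * ∑ i with g i ∈ B, c i ^ 2 :=
          sq_sum_le_card_mul_sum_sq
      _ ≤ d * ∑ i, c i ^ 2 := by
          have hcard : (#{i | g i ∈ B} : ℝ) ≤ d := by
            exact_mod_cast (Finset.card_filter_le univ _).trans_eq (Finset.card_fin d)
          exact mul_le_mul hcard (Finset.sum_le_sum_of_subset_of_nonneg (Finset.filter_subset _ _)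
            fun _ _ _ => sq_nonneg _) (Finset.sum_nonneg fun _ _ => sq_nonneg _) hd.le
      _ ≤ d * 2 := by gcongr
  rw [hrect, div_pow, div_le_div_iff₀ (by positivity) hd]
  nlinarith

theorem le_sqDimM_of_discUnder_le (hA : ∀ x y, A x y = 1 ∨ A x y = -1) {μ : X → ℝ} {ν : Y → ℝ}
    (hμ : IsDist μ) (hν : IsDist ν) {m : ℕ} (hm : 2 ≤ m)
    (hδ : 4 * discUnder (fun x y => μ x * ν y) A * ((m : ℝ) - 1) ≤ 1 / m) : m ≤ sqDimM A := by
  have hsign : ∀ x y, |A x y| ≤ 1 := fun x y => by rcases hA x y with h | h <;> simp [h]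
  obtain ⟨g, hg⟩ := exists_fin_pairwise_le_of_sum_mul_le (fun x x' => |corr ν A x x'|)
    (fun _ _ => abs_nonneg _) (fun x x' => by rw [corr_comm]) hμ
    (mul_nonneg zero_le_four (discUnder_nonneg _ A))
    (fun x' => sum_mul_abs_corr_le A hμ.1 ν (hsign x')) m (by linarith)
  refine le_sqDimM hν g (fun i j hij => by_contra fun hne => ?_) hg
  have hone : |corr ν A (g i) (g j)| = 1 := by
    have hsame : corr ν A (g i) (g j) = corr ν A (g i) (g i) := by simp only [corr, hij]
    rw [hsame, corr_self hν (hA (g i)), abs_one]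
  have hm' : 1 / (m : ℝ) < 1 := by
    rw [div_lt_one (by positivity)]; exact_mod_cast hm
  linarith [hg i j hne]

theorem one_div_le_discUnder (hA : ∀ x y, A x y = 1 ∨ A x y = -1) {μ : X → ℝ} {ν : Y → ℝ}
    (hμ : IsDist μ) (hν : IsDist ν) :
    1 / (8 * (sqDimM A : ℝ) ^ 2) ≤ discUnder (fun x y => μ x * ν y) A := by
  set d := sqDimM A
  set δ := discUnder (fun x y => μ x * ν y) A
  rcases Nat.eq_zero_or_pos d with hd | hd
  · simpa [hd] using discUnder_nonneg _ A
  by_contra! hlt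
  have hd' : (1 : ℝ) ≤ d := by exact_mod_cast hd
  have hδ : 0 ≤ δ := discUnder_nonneg _ A
  have h8 : δ * (8 * d ^ 2) < 1 := (lt_div_iff₀ (by positivity)).1 (by simpa using hlt)
  have : d + 1 ≤ d := le_sqDimM_of_discUnder_le hA hμ hν (by omega) <| by
    rw [le_div_iff₀ (by positivity)]
    push_cast
    nlinarith [mul_nonneg hδ (sub_nonneg.2 hd')]
  omega

end ProductDiscrepancy

/-- Sherstov's theorem: `√(sq(A)/2) ≤ 1/disc×(A) ≤ 8·sq(A)²`, equivalently
`1/(8·sq(A)²) ≤ disc×(A) ≤ √(2/sq(A))`. -/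
theorem sq_dim_vs_product_discrepancy {X Y : Type}
    [Fintype X] [Nonempty X] [Fintype Y] [Nonempty Y]
    (A : X → Y → ℝ) (hA : ∀ x y, A x y = 1 ∨ A x y = -1) :
    (Real.sqrt ((sqDimM A : ℝ) / 2) ≤ 1 / discProd A ∧
      1 / discProd A ≤ 8 * (sqDimM A : ℝ) ^ 2) ∧
    (1 / (8 * (sqDimM A : ℝ) ^ 2) ≤ discProd A ∧
      discProd A ≤ Real.sqrt (2 / (sqDimM A : ℝ))) := by
  have hd : (0 : ℝ) < sqDimM A := by exact_mod_cast one_le_sqDimM A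
  have : NeZero (sqDimM A) := ⟨Nat.one_le_iff_ne_zero.1 (one_le_sqDimM A)⟩
  obtain ⟨ρ, hρ, g, hg⟩ := exists_sqDimM_family A
  have hup : discProd A ≤ √(2 / sqDimM A) :=
    (discProd_le_discUnder A (isDist_empiricalDist g) hρ).trans
      (discUnder_empiricalDist_le hA hρ g hg)
  have hlow : 1 / (8 * (sqDimM A : ℝ) ^ 2) ≤ discProd A :=
    le_csInf ⟨_, _, _, isDist_empiricalDist id, isDist_empiricalDist id, rfl⟩
      fun _ ⟨_, _, hμ, hν, hr⟩ => hr ▸ one_div_le_discUnder hA hμ hν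
  have hpos : 0 < discProd A := lt_of_lt_of_le (by positivity) hlow
  refine ⟨⟨?_, ?_⟩, hlow, hup⟩
  · calc √(sqDimM A / 2) = 1 / √(2 / sqDimM A) := by rw [one_div, ← Real.sqrt_inv, inv_div]
      _ ≤ 1 / discProd A := one_div_le_one_div_of_le hpos hup
  · calc 1 / discProd A ≤ 1 / (1 / (8 * (sqDimM A : ℝ) ^ 2)) :=
          one_div_le_one_div_of_le (by positivity) hlow
      _ = 8 * (sqDimM A : ℝ) ^ 2 := one_div_one_div _
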